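/- Let G be a nonabelian finite 2-group with δ_CD(G) ≤ 6. Then the center Z(G) is cyclic of order 2 or 4. -/

import Mathlib

noncomputable def mCD {G : Type*} [Group G] (H : Subgroup G) : ℕ :=
  Nat.card H * Nat.card (Subgroup.centralizer (H : Set G))

noncomputable def mStar (G : Type*) [Group G] : ℕ :=
  sSup (Set.range fun H : Subgroup G => mCD H)

noncomputable def CD (G : Type*) [Group G] : Set (Subgroup G) :=
  {H | mCD H = mStar G}

noncomputable def deltaCD (G : Type*) [Group G] : ℕ :=
  Nat.card {H : Subgroup G // H ∉ CD G}

/-!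
A subgroup `H` with `m_G(H) = m*(G)` contains `Z(G)`: otherwise `H ⊔ Z(G)` has the same
centralizer and larger order. So it suffices to find seven subgroups not containing `Z(G)`
whenever `Z(G)` is not cyclic of order 2 or 4; let `a`, `b` be non-commuting elements.

* If `Z(G)` is not cyclic, it contains two distinct involutions `s`, `t`, and the cyclic subgroups
  generated by `1, s, t, st, a, b, ab` are distinct and cannot contain `Z(G)`.
* If `Z(G)` is cyclic of order at least 8 and `t` is a noncentral involution, let `v ∈ Z(G)` have
  order 4 and `u = v²`. The subgroups `1, ⟨u⟩, ⟨v⟩, ⟨t⟩, ⟨tu⟩, ⟨t, u⟩, ⟨t, v⟩` have exponent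
  dividing 4, so they miss a generator of `Z(G)`.
* Otherwise `u` is the only involution of `G`. Then of two commuting elements, the one of smaller
  order is a power of the other. So elements of order dividing 4 lie in `⟨v⟩ ≤ Z(G)`, and an
  element `g` of maximal order generates its own centralizer. If `⟨g⟩ ≠ G`, the normalizer
  condition gives `y ∉ ⟨g⟩` normalising `⟨g⟩` with `y² ∈ ⟨g⟩`. Conjugation by `y` is then
  `g ↦ gb` with `b² = 1`, and this forces some `g^i y` to have order dividing 4, hence to be
  central: a contradiction, so `G` is cyclic.
-/

open Subgroup

section Group

variable {G : Type*} [Group G]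

lemma eq_one_or_eq_of_mem_zpowers_of_sq_eq_one {t x : G} (ht : t ^ 2 = 1) (hx : x ∈ zpowers t) :
    x = 1 ∨ x = t := by
  obtain ⟨k, rfl⟩ := mem_zpowers_iff.mp hx
  rcases Int.even_or_odd' k with ⟨m, rfl | rfl⟩
  · left; rw [zpow_mul, zpow_ofNat, ht, one_zpow]
  · right; rw [zpow_add, zpow_mul, zpow_ofNat, ht, one_zpow, one_mul, zpow_one]

lemma notMem_zpowers_of_sq_eq_one {t x : G} (ht : t ^ 2 = 1) (hx1 : x ≠ 1) (hxt : x ≠ t) :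
    x ∉ zpowers t := fun hx => (eq_one_or_eq_of_mem_zpowers_of_sq_eq_one ht hx).elim hx1 hxt

lemma pow_eq_one_of_mem_zpowers {x y : G} {n : ℕ} (hx : x ^ n = 1) (hy : y ∈ zpowers x) :
    y ^ n = 1 :=
  orderOf_dvd_iff_pow_eq_one.mp
    ((orderOf_dvd_of_mem_zpowers hy).trans (orderOf_dvd_of_pow_eq_one hx))

lemma pow_eq_one_of_mem_sup_zpowers {t c x : G} {n : ℕ} (hc : c ∈ center G) (ht : t ^ n = 1)
    (hcn : c ^ n = 1) (hx : x ∈ zpowers t ⊔ zpowers c) : x ^ n = 1 := by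
  have : (zpowers c).Normal := ⟨fun y hy g => by
    rw [(mem_center_iff.mp (zpowers_le.mpr hc hy) g), mul_inv_cancel_right]; exact hy⟩
  obtain ⟨y, hy, w, hw, rfl⟩ := mem_sup_of_normal_right.mp hx
  have hyw : Commute y w := (mem_center_iff.mp (zpowers_le.mpr hc hw) y)
  rw [hyw.mul_pow, pow_eq_one_of_mem_zpowers ht hy, pow_eq_one_of_mem_zpowers hcn hw, one_mul]

lemma zpowers_ne_zpowers_of_not_commute {x y : G} (h : ¬ Commute x y) :
    zpowers x ≠ zpowers y := fun he => by
  obtain ⟨k, rfl⟩ := mem_zpowers_iff.mp (he ▸ mem_zpowers y)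
  exact h ((Commute.refl x).zpow_right k)

lemma notMem_center_of_not_commute {x y : G} (h : ¬ Commute x y) : x ∉ center G :=
  fun hx => h (mem_center_iff.mp hx y).symm

lemma IsCyclic.eq_one_or_eq_of_sq_eq_one [Finite G] [IsCyclic G] {s t : G} (hs : s ^ 2 = 1)
    (hs1 : s ≠ 1) (ht : t ^ 2 = 1) : t = 1 ∨ t = s := by
  classical
  have := Fintype.ofFinite G
  by_contra! hts
  have hcard := IsCyclic.card_orderOf_eq_totient (α := G) (d := 2)
    (by rw [← orderOf_eq_prime hs hs1, ← Nat.card_eq_fintype_card]; exact orderOf_dvd_natCard s)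
  rw [Nat.totient_two] at hcard
  exact hts.2 (Finset.card_le_one.mp hcard.le t (by simpa using orderOf_eq_prime ht hts.1) s
    (by simpa using orderOf_eq_prime hs hs1))

section UniqueInvolution

variable {u : G}

lemma pow_two_pow_eq_of_orderOf_eq (hu : ∀ t : G, t ^ 2 = 1 → t = 1 ∨ t = u) {g : G} {q : ℕ}
    (hg : orderOf g = 2 ^ (q + 1)) : g ^ 2 ^ q = u := by
  refine (hu _ ?_).resolve_left (pow_ne_one_of_lt_orderOf (by positivity) ?_)
  · rw [← pow_mul, ← pow_succ, ← hg, pow_orderOf_eq_one]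
  · rw [hg]; exact Nat.pow_lt_pow_right one_lt_two q.lt_succ_self

lemma mem_zpowers_of_commute_of_pow_eq_one (hu : ∀ t : G, t ^ 2 = 1 → t = 1 ∨ t = u) {g : G}
    {q : ℕ} (hg : orderOf g = 2 ^ q) :
    ∀ {p : ℕ} {z : G}, p ≤ q → z ^ 2 ^ p = 1 → Commute z g → z ∈ zpowers g := by
  intro p
  induction p with
  | zero =>
    intro z _ hz _
    rw [pow_zero, pow_one] at hz
    exact hz ▸ one_mem _
  | succ p ih =>
    intro z hpq hz hzg
    by_cases hz' : z ^ 2 ^ p = 1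
    · exact ih (by omega) hz' hzg
    obtain ⟨d, rfl⟩ := Nat.exists_eq_add_of_le hpq
    have hzu : z ^ 2 ^ p = u :=
      (hu _ (by rw [← pow_mul, ← pow_succ, hz])).resolve_left hz'
    have hgu : g ^ 2 ^ (d + p) = u :=
      pow_two_pow_eq_of_orderOf_eq hu (by rw [hg]; ring_nf)
    -- `z` and `g ^ 2 ^ d` have the same `2 ^ p`-th power `u`, so their quotient has smaller order
    have hw : (z * (g ^ 2 ^ d)⁻¹) ^ 2 ^ p = 1 := by
      rw [(hzg.pow_right _).inv_right.mul_pow, inv_pow, ← pow_mul, ← pow_add, hzu, hgu,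
        mul_inv_cancel]
    have hmem := ih (by omega) hw (hzg.mul_left ((Commute.refl g).pow_left _).inv_left)
    simpa using mul_mem hmem (pow_mem (mem_zpowers g) (2 ^ d))

lemma IsPGroup.mem_zpowers_of_commute_of_orderOf_le (hG : IsPGroup 2 G)
    (hu : ∀ t : G, t ^ 2 = 1 → t = 1 ∨ t = u) {z g : G} (hzg : Commute z g)
    (hle : orderOf z ≤ orderOf g) : z ∈ zpowers g := by
  obtain ⟨p, hp⟩ := IsPGroup.iff_orderOf.mp hG z
  obtain ⟨q, hq⟩ := IsPGroup.iff_orderOf.mp hG g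
  rw [hp, hq, Nat.pow_le_pow_iff_right one_lt_two] at hle
  exact mem_zpowers_of_commute_of_pow_eq_one hu hq hle (hp ▸ pow_orderOf_eq_one z) hzg

end UniqueInvolution

lemma IsPGroup.isCyclic_of_unique_involution_of_commute [Finite G] (hG : IsPGroup 2 G) {u : G}
    (hu : ∀ t : G, t ^ 2 = 1 → t = 1 ∨ t = u) (hcomm : ∀ a b : G, Commute a b) : IsCyclic G := by
  obtain ⟨g, hg⟩ := Finite.exists_max (orderOf : G → ℕ)
  exact ⟨g, fun x =>
    mem_zpowers_iff.mp (hG.mem_zpowers_of_commute_of_orderOf_le hu (hcomm x g) (hg x))⟩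

lemma IsPGroup.exists_pow_notMem_and_pow_mem {p : ℕ} (hG : IsPGroup p G) {H : Subgroup G} {x : G}
    (hx : x ∉ H) : ∃ k : ℕ, x ^ p ^ k ∉ H ∧ (x ^ p ^ k) ^ p ∈ H := by
  classical
  have hex : ∃ n, x ^ p ^ n ∈ H := (hG x).imp fun n (hn : x ^ p ^ n = 1) => hn ▸ one_mem H
  have hpos : Nat.find hex ≠ 0 := fun h0 => hx (by simpa [h0] using Nat.find_spec hex)
  refine ⟨Nat.find hex - 1, Nat.find_min hex (by omega), ?_⟩
  rw [← pow_mul, ← pow_succ, Nat.sub_add_cancel (Nat.pos_of_ne_zero hpos)]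
  exact Nat.find_spec hex

lemma IsPGroup.sq_eq_one_of_conj_eq_inv (hG : IsPGroup 2 G)
    (hfour : ∀ x : G, x ^ 4 = 1 → x ∈ center G) {b y : G} (h : y * b * y⁻¹ = b⁻¹) :
    b ^ 2 = 1 := by
  by_contra hb
  obtain ⟨r, hr⟩ := IsPGroup.iff_orderOf.mp hG b
  have hr2 : 2 ≤ r := by
    by_contra hlt
    refine hb (orderOf_dvd_iff_pow_eq_one.mp ?_)
    simpa [hr] using pow_dvd_pow 2 (by omega : r ≤ 1)
  -- an element of order 4 in `⟨b⟩` is central, yet inverted by `y`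
  set c := b ^ (orderOf b / 4)
  have hc : orderOf c = 4 :=
    orderOf_pow_orderOf_div (by rw [hr]; positivity) (hr ▸ pow_dvd_pow 2 hr2)
  have hcc : c = c⁻¹ :=
    calc c = y * c * y⁻¹ := by
          rw [mem_center_iff.mp (hfour c (hc ▸ pow_orderOf_eq_one c)) y, mul_inv_cancel_right]
      _ = c⁻¹ := by rw [← conj_pow, h, inv_pow]
  have hc2 : c ^ 2 = 1 := by rw [sq]; nth_rw 2 [hcc]; exact mul_inv_cancel c
  have := orderOf_dvd_of_pow_eq_one hc2
  rw [hc] at this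
  norm_num at this

lemma IsPGroup.exists_zpow_mul_pow_four_eq_one (hG : IsPGroup 2 G)
    (hfour : ∀ x : G, x ^ 4 = 1 → x ∈ center G) {g y : G} {e m : ℤ}
    (he : g ^ e = y * g * y⁻¹) (hm : g ^ m = y ^ 2) (hyg : ¬ Commute y g) :
    ∃ i : ℤ, (g ^ i * y) ^ 4 = 1 := by
  have hconj (j : ℤ) : y * g ^ j * y⁻¹ = g ^ (e * j) := by rw [← conj_zpow, ← he, zpow_mul]
  -- conjugation by `y` is an involution of `⟨g⟩`, as `y ^ 2 ∈ ⟨g⟩`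
  have hee : g ^ (e * e) = g :=
    calc g ^ (e * e) = y * (y * g * y⁻¹) * y⁻¹ := by rw [← he, hconj]
      _ = g := by
        rw [show y * (y * g * y⁻¹) * y⁻¹ = y ^ 2 * g * (y ^ 2)⁻¹ by rw [sq]; group, ← hm]
        group
  have hb : y * g ^ (e - 1) * y⁻¹ = (g ^ (e - 1))⁻¹ := by
    rw [hconj]
    calc g ^ (e * (e - 1)) = g ^ (e * e) * g ^ (-e) := by rw [← zpow_add]; ring_nf
      _ = (g ^ (e - 1))⁻¹ := by rw [hee]; group
  have hb2 : (g ^ (e - 1)) ^ 2 = 1 := hG.sq_eq_one_of_conj_eq_inv hfour hb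
  have hb1 : g ^ (e - 1) ≠ 1 := fun h1 => hyg <| mul_inv_eq_iff_eq_mul.mp <| by
    rw [← he, ← sub_add_cancel e 1, zpow_add, h1, one_mul, zpow_one]
  have hbm : (g ^ (e - 1)) ^ m = 1 := by
    have : y * g ^ m * y⁻¹ = g ^ m := by rw [hm]; group
    rw [hconj] at this
    rw [← zpow_mul, sub_mul, zpow_sub, this, one_mul, mul_inv_cancel]
  obtain ⟨i, rfl⟩ : Even m := by
    by_contra hodd
    obtain ⟨j, rfl⟩ := Int.not_even_iff_odd.mp hodd
    apply hb1
    rw [← hbm, zpow_add, zpow_mul, zpow_ofNat, hb2, one_zpow, one_mul, zpow_one]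
  have hsq : (g ^ (-i) * y) ^ 2 = (g ^ (e - 1)) ^ (-i) :=
    calc (g ^ (-i) * y) ^ 2 = g ^ (-i) * (y * g ^ (-i) * y⁻¹) * y ^ 2 := by rw [sq]; group
      _ = (g ^ (e - 1)) ^ (-i) := by rw [hconj, ← hm]; group
  refine ⟨-i, ?_⟩
  rw [show 4 = 2 * 2 from rfl, pow_mul, hsq, ← zpow_natCast, ← zpow_mul, mul_comm, zpow_mul,
    zpow_natCast, hb2, one_zpow]

lemma IsPGroup.isCyclic_of_unique_involution_of_orderOf_eq_four [Finite G] (hG : IsPGroup 2 G)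
    {u v : G} (hu : ∀ t : G, t ^ 2 = 1 → t = 1 ∨ t = u) (hv : v ∈ center G)
    (hv4 : orderOf v = 4) : IsCyclic G := by
  have : Fact (Nat.Prime 2) := ⟨Nat.prime_two⟩
  obtain ⟨g, hg⟩ := Finite.exists_max (orderOf : G → ℕ)
  have hcent : ∀ x, Commute x g → x ∈ zpowers g := fun x hx =>
    hG.mem_zpowers_of_commute_of_orderOf_le hu hx (hg x)
  have hfour : ∀ x : G, x ^ 4 = 1 → x ∈ center G := fun x hx => zpowers_le.mpr hv <|
    hG.mem_zpowers_of_commute_of_orderOf_le hu (mem_center_iff.mp hv x)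
      (hv4 ▸ orderOf_le_of_pow_eq_one (by norm_num) hx)
  rw [isCyclic_iff_exists_zpowers_eq_top]
  refine ⟨g, by_contra fun hne => ?_⟩
  obtain ⟨y₀, hy₀N, hy₀⟩ := SetLike.exists_of_lt
    (Group.normalizerCondition_of_isNilpotent (h := hG.isNilpotent) _ (lt_top_iff_ne_top.mpr hne))
  obtain ⟨k, hy, hy2⟩ := hG.exists_pow_notMem_and_pow_mem hy₀
  have hyN := pow_mem hy₀N (2 ^ k)
  generalize y₀ ^ 2 ^ k = y at hy hy2 hyN
  obtain ⟨e, he⟩ := mem_zpowers_iff.mp ((mem_normalizer_iff.mp hyN g).mp (mem_zpowers g))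
  obtain ⟨m, hm⟩ := mem_zpowers_iff.mp hy2
  have hyg : ¬ Commute y g := fun h => hy (hcent y h)
  obtain ⟨i, hw⟩ := hG.exists_zpow_mul_pow_four_eq_one hfour he hm hyg
  have hwg : Commute (g ^ i * y) g := (mem_center_iff.mp (hfour _ hw) g).symm
  exact hyg (by simpa using ((Commute.refl g).zpow_left i).inv_left.mul_left hwg)

lemma nodup_append_of_le_center {l₁ l₂ : List (Subgroup G)} (h₁ : l₁.Nodup) (h₂ : l₂.Nodup)
    (hle : ∀ H ∈ l₁, H ≤ center G) (hnle : ∀ K ∈ l₂, ¬ K ≤ center G) : (l₁ ++ l₂).Nodup :=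
  List.nodup_append.mpr ⟨h₁, h₂, fun H hH K hK hHK => hnle K hK (hHK ▸ hle H hH)⟩

lemma nodup_zpowers_of_central_involutions {s t a b : G} (hs : s ∈ center G)
    (ht : t ∈ center G) (hs2 : s ^ 2 = 1) (ht2 : t ^ 2 = 1) (hs1 : s ≠ 1) (ht1 : t ≠ 1)
    (hts : t ≠ s) (hab : ¬ Commute a b) :
    ([1, s, t, s * t].map zpowers ++ [a, b, a * b].map zpowers).Nodup := by
  have hst1 : s * t ≠ 1 := fun h => hts (mul_left_cancel (h.trans (hs2.symm.trans (sq s))))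
  have hna : ¬ Commute a (a * b) := fun h =>
    hab (by simpa using (Commute.refl a).inv_right.mul_right h)
  have hnb : ¬ Commute b (a * b) := fun h =>
    hab (show Commute b a by simpa using h.mul_right (Commute.refl b).inv_right).symm
  refine nodup_append_of_le_center ?_ ?_ ?_ ?_
  · simp only [List.map_cons, List.map_nil, List.nodup_cons, List.mem_cons, List.not_mem_nil,
      or_false, not_or, List.nodup_nil, and_true, not_false_eq_true, zpowers_one_eq_bot]
    refine ⟨⟨?_, ?_, ?_⟩, ⟨?_, ?_⟩, ?_⟩
    · exact (zpowers_ne_bot.mpr hs1).symm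
    · exact (zpowers_ne_bot.mpr ht1).symm
    · exact (zpowers_ne_bot.mpr hst1).symm
    · exact (ne_of_mem_of_not_mem' (mem_zpowers t) (notMem_zpowers_of_sq_eq_one hs2 ht1 hts)).symm
    · exact (ne_of_mem_of_not_mem' (mem_zpowers _)
        (notMem_zpowers_of_sq_eq_one hs2 hst1 fun h => ht1 (mul_eq_left.mp h))).symm
    · exact (ne_of_mem_of_not_mem' (mem_zpowers _)
        (notMem_zpowers_of_sq_eq_one ht2 hst1 fun h => hs1 (mul_eq_right.mp h))).symm
  · simp only [List.map_cons, List.map_nil, List.nodup_cons, List.mem_cons, List.not_mem_nil,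
      or_false, not_or, List.nodup_nil, and_true, not_false_eq_true]
    exact ⟨⟨zpowers_ne_zpowers_of_not_commute hab, zpowers_ne_zpowers_of_not_commute hna⟩,
      zpowers_ne_zpowers_of_not_commute hnb⟩
  · simp only [List.map_cons, List.map_nil, List.forall_mem_cons, List.not_mem_nil,
      IsEmpty.forall_iff, implies_true, and_true, zpowers_le]
    exact ⟨one_mem _, hs, ht, mul_mem hs ht⟩
  · simp only [List.map_cons, List.map_nil, List.forall_mem_cons, List.not_mem_nil,
      IsEmpty.forall_iff, implies_true, and_true, zpowers_le]
    exact ⟨notMem_center_of_not_commute hab, notMem_center_of_not_commute (mt Commute.symm hab),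
      notMem_center_of_not_commute fun h => hna h.symm⟩

lemma nodup_subgroups_of_noncentral_involution {u v t : G} (hu : u ∈ center G)
    (hv : v ∈ center G) (hu2 : u ^ 2 = 1) (hu1 : u ≠ 1) (hv2 : v ^ 2 ≠ 1) (ht2 : t ^ 2 = 1)
    (ht : t ∉ center G) :
    ([⊥, zpowers u, zpowers v] ++
      [zpowers t, zpowers (t * u), zpowers t ⊔ zpowers u, zpowers t ⊔ zpowers v]).Nodup := by
  have hv1 : v ≠ 1 := fun h => hv2 (by rw [h, one_pow])
  have hvu : v ≠ u := fun h => hv2 (h ▸ hu2)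
  have ht1 : t ≠ 1 := fun h => ht (h ▸ one_mem _)
  have htu2 : (t * u) ^ 2 = 1 := by
    rw [Commute.mul_pow (mem_center_iff.mp hu t), ht2, hu2, one_mul]
  have htu1 : t * u ≠ 1 := fun h => ht (eq_inv_of_mul_eq_one_left h ▸ inv_mem hu)
  have htut : t * u ≠ t := fun h => hu1 (mul_eq_left.mp h)
  refine nodup_append_of_le_center ?_ ?_ ?_ ?_
  · simp only [List.nodup_cons, List.mem_cons, List.not_mem_nil, or_false, not_or,
      List.nodup_nil, and_true, not_false_eq_true]
    exact ⟨⟨(zpowers_ne_bot.mpr hu1).symm, (zpowers_ne_bot.mpr hv1).symm⟩,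
      (ne_of_mem_of_not_mem' (mem_zpowers v) (notMem_zpowers_of_sq_eq_one hu2 hv1 hvu)).symm⟩
  · simp only [List.nodup_cons, List.mem_cons, List.not_mem_nil, or_false, not_or,
      List.nodup_nil, and_true, not_false_eq_true]
    refine ⟨⟨?_, ?_, ?_⟩, ⟨?_, ?_⟩, ?_⟩
    · exact (ne_of_mem_of_not_mem' (mem_zpowers _)
        (notMem_zpowers_of_sq_eq_one ht2 htu1 htut)).symm
    · exact (ne_of_mem_of_not_mem' (mem_sup_right (mem_zpowers _))
        (notMem_zpowers_of_sq_eq_one ht2 hu1 fun h => ht (h ▸ hu))).symm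
    · exact (ne_of_mem_of_not_mem' (mem_sup_right (mem_zpowers _))
        (notMem_zpowers_of_sq_eq_one ht2 hv1 fun h => ht (h ▸ hv))).symm
    · exact (ne_of_mem_of_not_mem' (mem_sup_left (mem_zpowers _))
        (notMem_zpowers_of_sq_eq_one htu2 ht1 htut.symm)).symm
    · exact (ne_of_mem_of_not_mem' (mem_sup_left (mem_zpowers _))
        (notMem_zpowers_of_sq_eq_one htu2 ht1 htut.symm)).symm
    · exact (ne_of_mem_of_not_mem' (mem_sup_right (mem_zpowers v))
        fun h => hv2 (pow_eq_one_of_mem_sup_zpowers hu ht2 hu2 h)).symm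
  · simp only [List.forall_mem_cons, List.not_mem_nil, IsEmpty.forall_iff, implies_true,
      and_true, zpowers_le]
    exact ⟨bot_le, hu, hv⟩
  · simp only [List.forall_mem_cons, List.not_mem_nil, IsEmpty.forall_iff, implies_true,
      and_true, zpowers_le]
    exact ⟨ht, fun h => ht (by simpa using mul_mem h (inv_mem hu)),
      fun h => ht (h (mem_sup_left (mem_zpowers t))),
      fun h => ht (h (mem_sup_left (mem_zpowers t)))⟩

lemma centralizer_sup_center (H : Subgroup G) :
    centralizer ((H ⊔ center G : Subgroup G) : Set G) = centralizer (H : Set G) := by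
  refine le_antisymm (centralizer_le (SetLike.coe_subset_coe.mpr le_sup_left)) ?_
  rw [le_centralizer_iff]
  exact sup_le (le_centralizer_iff.mp le_rfl) (center_le_centralizer _)

end Group

section CD

variable {G : Type*} [Group G] [Finite G]

lemma mCD_le_mStar (H : Subgroup G) : mCD H ≤ mStar G :=
  le_csSup ⟨Nat.card G * Nat.card G, by
    rintro _ ⟨K, rfl⟩
    exact Nat.mul_le_mul K.card_le_card_group (centralizer _).card_le_card_group⟩
    (Set.mem_range_self H)

lemma center_le_of_mem_CD {H : Subgroup G} (hH : H ∈ CD G) : center G ≤ H := by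
  by_contra hZ
  have hlt : H < H ⊔ center G := left_lt_sup.mpr hZ
  have : mCD H < mCD (H ⊔ center G) := by
    rw [mCD, mCD, centralizer_sup_center]
    have hcard : Nat.card H < Nat.card (H ⊔ center G : Subgroup G) :=
      (card_le_of_le hlt.le).lt_of_ne fun he => hlt.ne (eq_of_le_of_card_ge hlt.le he.ge)
    exact Nat.mul_lt_mul_of_lt_of_le hcard le_rfl Nat.card_pos
  exact (mCD_le_mStar _).not_gt (hH ▸ this)

lemma length_le_deltaCD (l : List (Subgroup G)) (hl : l.Nodup)
    (h : ∀ H ∈ l, ¬ center G ≤ H) : l.length ≤ deltaCD G := by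
  classical
  calc l.length = (l.toFinset : Set (Subgroup G)).ncard := by
        rw [Set.ncard_coe_finset, List.toFinset_card_of_nodup hl]
    _ ≤ {H | H ∉ CD G}.ncard := Set.ncard_le_ncard
        (fun H hH => mt center_le_of_mem_CD (h H (List.mem_toFinset.mp hH))) (Set.toFinite _)
    _ = deltaCD G := (Nat.card_coe_set_eq _).symm

lemma seven_le_deltaCD_of_not_isCyclic_center (hG : IsPGroup 2 G) (hZ : ¬ IsCyclic (center G))
    {a b : G} (hab : ¬ Commute a b) : 7 ≤ deltaCD G := by
  have hinv (w : center G) : ∃ x ∈ center G, x ^ 2 = 1 ∧ x ≠ 1 ∧ x ≠ w := by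
    by_contra! h
    refine hZ ((hG.to_subgroup _).isCyclic_of_unique_involution_of_commute (u := w)
      (fun x hx => ?_) fun x y => Subtype.ext ((mem_center_iff.mp y.2) x))
    exact or_iff_not_imp_left.mpr fun hx1 =>
      Subtype.ext (h x x.2 (by exact_mod_cast hx) (by exact_mod_cast hx1))
  obtain ⟨s, hs, hs2, hs1, -⟩ := hinv 1
  obtain ⟨t, ht, ht2, ht1, hts⟩ := hinv ⟨s, hs⟩
  refine length_le_deltaCD _ (nodup_zpowers_of_central_involutions hs ht hs2 ht2 hs1 ht1 hts hab) ?_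
  rw [← List.map_append, List.forall_mem_map]
  exact fun x _ hle => hZ (isCyclic_of_le hle)

lemma seven_le_deltaCD_of_noncentral_involution {z v t : G} (hz : z ∈ center G)
    (hz4 : z ^ 4 ≠ 1) (hv : v ∈ center G) (hv4 : orderOf v = 4) (ht2 : t ^ 2 = 1)
    (ht : t ∉ center G) : 7 ≤ deltaCD G := by
  have hv4' : v ^ 4 = 1 := hv4 ▸ pow_orderOf_eq_one v
  have hu : v ^ 2 ∈ center G := pow_mem hv 2
  have hu1 : v ^ 2 ≠ 1 := pow_ne_one_of_lt_orderOf (by norm_num) (by omega)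
  have hu4 : (v ^ 2) ^ 4 = 1 := by rw [← pow_mul, mul_comm, pow_mul, hv4', one_pow]
  have ht4 : t ^ 4 = 1 := by rw [show 4 = 2 * 2 from rfl, pow_mul, ht2, one_pow]
  have htu4 : (t * v ^ 2) ^ 4 = 1 := by
    rw [Commute.mul_pow (mem_center_iff.mp hu t), ht4, hu4, one_mul]
  refine length_le_deltaCD _ (nodup_subgroups_of_noncentral_involution hu hv
    (by rw [← pow_mul]; exact hv4') hu1 hu1 ht2 ht) fun H hH hle => hz4 ?_
  -- each listed subgroup has exponent dividing 4
  simp only [List.cons_append, List.nil_append, List.mem_cons, List.not_mem_nil, or_false] at hH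
  rcases hH with rfl | rfl | rfl | rfl | rfl | rfl | rfl
  · rw [mem_bot.mp (hle hz), one_pow]
  · exact pow_eq_one_of_mem_zpowers hu4 (hle hz)
  · exact pow_eq_one_of_mem_zpowers hv4' (hle hz)
  · exact pow_eq_one_of_mem_zpowers ht4 (hle hz)
  · exact pow_eq_one_of_mem_zpowers htu4 (hle hz)
  · exact pow_eq_one_of_mem_sup_zpowers hu ht4 hu4 (hle hz)
  · exact pow_eq_one_of_mem_sup_zpowers hv ht4 hv4' (hle hz)

lemma seven_le_deltaCD_of_isCyclic_center (hG : IsPGroup 2 G) (hnc : ¬ IsCyclic G)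
    [IsCyclic (center G)] (h8 : 8 ≤ Nat.card (center G)) : 7 ≤ deltaCD G := by
  obtain ⟨z, hz⟩ := IsCyclic.exists_ofOrder_eq_natCard (α := center G)
  obtain ⟨n, hn⟩ := IsPGroup.iff_card.mp (hG.to_subgroup (center G))
  have h3 : 3 ≤ n := (Nat.pow_le_pow_iff_right one_lt_two).mp (hn ▸ h8)
  rw [← orderOf_coe, hn] at hz
  have hz4 : (z : G) ^ 4 ≠ 1 :=
    pow_ne_one_of_lt_orderOf (by norm_num)
      (hz ▸ (Nat.pow_lt_pow_right one_lt_two h3 : 2 ^ 2 < 2 ^ n))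
  set v := (z : G) ^ (orderOf (z : G) / 4)
  have hv : v ∈ center G := pow_mem z.2 _
  have hv4 : orderOf v = 4 :=
    orderOf_pow_orderOf_div (by rw [hz]; positivity) (hz ▸ pow_dvd_pow 2 (by omega : 2 ≤ n))
  by_cases hinv : ∃ t : G, t ^ 2 = 1 ∧ t ∉ center G
  · obtain ⟨t, ht2, ht⟩ := hinv
    exact seven_le_deltaCD_of_noncentral_involution z.2 hz4 hv hv4 ht2 ht
  · push Not at hinv
    refine (hnc (hG.isCyclic_of_unique_involution_of_orderOf_eq_four (u := v ^ 2)
      (fun t ht2 => ?_) hv hv4)).elim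
    have hu1 : v ^ 2 ≠ 1 := pow_ne_one_of_lt_orderOf (by norm_num) (by omega)
    have := IsCyclic.eq_one_or_eq_of_sq_eq_one (G := center G) (s := ⟨v ^ 2, pow_mem hv 2⟩)
      (t := ⟨t, hinv t ht2⟩) (Subtype.ext (by simp [← pow_mul, hv4 ▸ pow_orderOf_eq_one v]))
      (fun h => hu1 (congrArg Subtype.val h)) (Subtype.ext (by simpa using ht2))
    simpa [Subtype.ext_iff] using this

end CD

theorem stmt14 {G : Type*} [Group G] [Finite G] (hG : IsPGroup 2 G)
    (hna : ¬ ∀ a b : G, a * b = b * a) (h : deltaCD G ≤ 6) :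
    IsCyclic (Subgroup.center G) ∧
      (Nat.card (Subgroup.center G) = 2 ∨ Nat.card (Subgroup.center G) = 4) := by
  have hnc : ¬ IsCyclic G := fun _ => hna (Std.Commutative.comm (op := (· * ·)))
  obtain ⟨a, b, hab⟩ : ∃ a b : G, ¬ Commute a b := by simpa [Commute, SemiconjBy] using hna
  have hZ : IsCyclic (center G) := by
    by_contra hZ
    have := seven_le_deltaCD_of_not_isCyclic_center hG hZ hab
    omega
  have : Nontrivial G := nontrivial_of_ne a 1 fun ha => hab (ha ▸ Commute.one_left b)
  have := hG.center_nontrivial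
  obtain ⟨n, hn⟩ := IsPGroup.iff_card.mp (hG.to_subgroup (center G))
  have hn1 : 1 ≤ n := Nat.one_le_iff_ne_zero.mpr fun h0 => by
    have := Finite.one_lt_card_iff_nontrivial.mpr this
    simp_all
  have hn2 : n ≤ 2 := by
    by_contra! h3
    have := seven_le_deltaCD_of_isCyclic_center hG hnc
      (hn ▸ (Nat.pow_le_pow_right two_pos h3 : 2 ^ 3 ≤ 2 ^ n))
    omega
  refine ⟨hZ, ?_⟩
  interval_cases n <;> simp [hn]
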